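/- arXiv:2504.06605 — 4 statements merged into one kernel-verified Lean document; each statement's English description precedes it below -/
import Mathlib

section
/- Let N, M be positive integers, Δ_f > 0, T = 1/Δ_f, and T_sym > 0. For all real numbers u_{n,m}, p_{n,m} (0 ≤ n ≤ N−1, 0 ≤ m ≤ M−1) and all real τ, f_d, the quantity (1/(M·N·T)) · Σ_{m=0}^{M−1} Σ_{n=0}^{N−1} u_{n,m} · p_{n,m} · e^{−i2π n Δ_f τ} · ∫_{m·T_sym}^{m·T_sym + T} e^{i2π f_d t} dt equals (sinc(π f_d T) · e^{iπ f_d T} / (M·N)) · Σ_{m=0}^{M−1} Σ_{n=0}^{N−1} u_{n,m} · p_{n,m} · e^{−i2π n Δ_f τ} · e^{i2π m f_d T_sym}, where sinc(x) = sin(x)/x for x ≠ 0 and sinc(0) = 1. -/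
open Real MeasureTheory intervalIntegral Finset

/-- Unnormalized cardinal sine: `sinc x = sin x / x` for `x ≠ 0`, `sinc 0 = 1`. -/
noncomputable def sinc (x : ℝ) : ℝ := if x = 0 then 1 else Real.sin x / x

/-!
Over a window `[a, a + T]` the phasor `e^{2πi f t}` integrates to its value at `a` times
`T · sinc(π f T) · e^{iπ f T}`: after `∫ e^{ct} = (e^{cb} - e^{ca}) / c`, the factorization
`e^{2iθ} - 1 = 2i sin θ · e^{iθ}` with `θ = π f T` splits off the half-window phase. This window
factor does not depend on the symbol index `m`, so it comes out of the double sum, and its `T`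
cancels the normalization `1 / T`.
-/

theorem sinc_mul_self (x : ℝ) : _root_.sinc x * x = Real.sin x := by
  unfold _root_.sinc
  split_ifs with hx
  · simp [hx]
  · exact div_mul_cancel₀ _ hx

theorem mul_sinc_pi_mul {f : ℝ} (hf : f ≠ 0) (T : ℝ) :
    T * _root_.sinc (π * f * T) = Real.sin (π * f * T) / (π * f) := by
  rw [eq_div_iff (mul_ne_zero pi_ne_zero hf), ← sinc_mul_self]
  ring

namespace Complex

theorem exp_two_mul_mul_I_sub_one (θ : ℂ) :
    exp (2 * θ * I) - 1 = 2 * I * sin θ * exp (θ * I) := by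
  have h : exp (-θ * I) * exp (θ * I) = 1 := by
    rw [← exp_add, neg_mul, neg_add_cancel, exp_zero]
  rw [sin, show 2 * θ * I = θ * I + θ * I by ring, exp_add]
  linear_combination h - (exp (-θ * I) * exp (θ * I) - exp (θ * I) ^ 2) * I_sq

end Complex

open Complex in
theorem integral_exp_two_pi_mul_I (f a T : ℝ) :
    ∫ t in a..a + T, exp (I * (2 * π * f * t)) =
      T * _root_.sinc (π * f * T) * exp (I * (π * f * T)) * exp (I * (2 * π * f * a)) := by
  rcases eq_or_ne f 0 with rfl | hf
  · simp [_root_.sinc]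
  set c : ℂ := I * (2 * π * f)
  have hc : c ≠ 0 := by simp [c, hf, pi_ne_zero]
  have hsinc : (T : ℂ) * _root_.sinc (π * f * T) = Complex.sin (π * f * T) / (π * f) := by
    exact_mod_cast mul_sinc_pi_mul hf T
  have hshift : exp (c * ↑(a + T)) - exp (c * a) =
      exp (I * (2 * π * f * a)) * (exp (2 * (π * f * T) * I) - 1) := by
    rw [mul_sub, ← Complex.exp_add, mul_one]
    congr 2 <;> push_cast <;> ring
  calc ∫ t in a..a + T, exp (I * (2 * π * f * t))
      = ∫ t in a..a + T, exp (c * t) := by simp only [c, mul_assoc]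
    _ = (exp (c * ↑(a + T)) - exp (c * a)) / c := integral_exp_mul_complex hc
    _ = _ := by
      rw [hshift, exp_two_mul_mul_I_sub_one, hsinc]
      simp only [c]
      field_simp

theorem ofdm_af_sum_identity_general (N M : ℕ)
    (Δf : ℝ) (hΔf : 0 < Δf) (T : ℝ) (hT : T = 1 / Δf) (Tsym : ℝ)
    (u p : ℕ → ℕ → ℝ) (τ fd : ℝ) :
    (1 / ((M : ℂ) * N * T)) *
      ∑ m ∈ range M, ∑ n ∈ range N,
        (u n m : ℂ) * (p n m : ℂ) *
          Complex.exp (-Complex.I * (2 * π * n * Δf * τ)) *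
          (∫ t in (m * Tsym)..(m * Tsym + T), Complex.exp (Complex.I * (2 * π * fd * t))) =
    ((_root_.sinc (π * fd * T) : ℂ) * Complex.exp (Complex.I * (π * fd * T)) / ((M : ℂ) * N)) *
      ∑ m ∈ range M, ∑ n ∈ range N,
        (u n m : ℂ) * (p n m : ℂ) *
          Complex.exp (-Complex.I * (2 * π * n * Δf * τ)) *
          Complex.exp (Complex.I * (2 * π * m * fd * Tsym)) := by
  have hT₀ : (T : ℂ) ≠ 0 := by
    rw [hT]
    exact_mod_cast (one_div_pos.mpr hΔf).ne'
  simp only [integral_exp_two_pi_mul_I, Finset.mul_sum]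
  refine Finset.sum_congr rfl fun m _ => Finset.sum_congr rfl fun n _ => ?_
  push_cast
  field_simp

/-- The core summation identity of Proposition 1 (closed-form OFDM ambiguity function):
the per-symbol integrals over `[m·T_sym, m·T_sym + T]` with `T = 1/Δ_f` evaluate exactly
to a common `sinc(π f_d T)·e^{iπ f_d T}` factor times the discrete delay-Doppler sum. -/
theorem ofdm_af_sum_identity (N M : ℕ) (hN : 0 < N) (hM : 0 < M)
    (Δf : ℝ) (hΔf : 0 < Δf) (T : ℝ) (hT : T = 1 / Δf) (Tsym : ℝ) (hTsym : 0 < Tsym)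
    (u p : ℕ → ℕ → ℝ) (τ fd : ℝ) :
    (1 / ((M : ℂ) * N * T)) *
      ∑ m ∈ range M, ∑ n ∈ range N,
        (u n m : ℂ) * (p n m : ℂ) *
          Complex.exp (-Complex.I * (2 * π * n * Δf * τ)) *
          (∫ t in (m * Tsym)..(m * Tsym + T), Complex.exp (Complex.I * (2 * π * fd * t))) =
    ((_root_.sinc (π * fd * T) : ℂ) * Complex.exp (Complex.I * (π * fd * T)) / ((M : ℂ) * N)) *
      ∑ m ∈ range M, ∑ n ∈ range N,
        (u n m : ℂ) * (p n m : ℂ) *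
          Complex.exp (-Complex.I * (2 * π * n * Δf * τ)) *
          Complex.exp (Complex.I * (2 * π * m * fd * Tsym)) :=
  ofdm_af_sum_identity_general N M Δf hΔf T hT Tsym u p τ fd
end

section
/- Let N, M be positive integers and let u_{n,m}, p_{n,m} be real numbers for 0 ≤ n ≤ N−1, 0 ≤ m ≤ M−1. Then the imaginary part of Σ_{m=0}^{M−1} Σ_{m'=0}^{M−1} Σ_{n=0}^{N−1} Σ_{n'=0}^{N−1} u_{n,m} u_{n',m'} p_{n,m} p_{n',m'} · n' · e^{iπ(n'−n)/N} equals Σ_{m=0}^{M−1} Σ_{m'=0}^{M−1} Σ_{0 ≤ n < n' ≤ N−1} u_{n,m} u_{n',m'} p_{n,m} p_{n',m'} · (n'−n) · sin((n'−n)π/N). -/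
/-!
Taking imaginary parts termwise turns each phase into `sin ((n' - n) π / N)`, and the sums over
`m, m'` factor through `a n = ∑ m, u n m * p n m`. In the remaining double sum over `n, n'` the
kernel `n' * sin ((n' - n) π / N)` is `n'` times a function odd under `n ↔ n'`: the diagonal
vanishes and each pair `n < n'` contributes `(n' - n) * sin ((n' - n) π / N)`.
-/

open Real Finset

theorem sum_range_sum_range_eq_sum_diag_add_sum_Ioo {M : Type*} [AddCommMonoid M] (N : ℕ)
    (f : ℕ → ℕ → M) :
    ∑ n ∈ range N, ∑ n' ∈ range N, f n n' =
      ∑ n ∈ range N, f n n + ∑ n ∈ range N, ∑ n' ∈ Ioo n N, (f n n' + f n' n) := by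
  have hsplit : ∀ n ∈ range N, ∑ n' ∈ range N, f n n' =
      ∑ n' ∈ range n, f n n' + (f n n + ∑ n' ∈ Ioo n N, f n n') := by
    intro n hn
    rw [← Ico_add_one_left_eq_Ioo, ← sum_range_add_sum_Ico _ (mem_range.mp hn),
      sum_range_succ, add_assoc]
    rfl
  have hlower : ∑ n ∈ range N, ∑ n' ∈ range n, f n n' =
      ∑ n ∈ range N, ∑ n' ∈ Ioo n N, f n' n := by
    simp only [range_eq_Ico, ← Ico_add_one_left_eq_Ioo]
    exact (sum_Ico_Ico_comm' 0 N fun n' n => f n n').symm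
  rw [sum_congr rfl hsplit, sum_add_distrib, hlower, sum_add_distrib, add_left_comm]
  simp only [← sum_add_distrib, add_comm]

theorem sum_range_sum_range_mul_natCast_of_antisymm {R : Type*} [CommRing R]
    [IsAddTorsionFree R] (N : ℕ) (a : ℕ → R) (g : ℕ → ℕ → R) (hg : ∀ n n', g n' n = -g n n') :
    ∑ n ∈ range N, ∑ n' ∈ range N, a n * a n' * ((n' : R) * g n n') =
      ∑ n ∈ range N, ∑ n' ∈ Ioo n N, a n * a n' * (((n' : R) - n) * g n n') := by
  have hdiag : ∀ n, g n n = 0 := fun n => neg_eq_self.mp (hg n n).symm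
  rw [sum_range_sum_range_eq_sum_diag_add_sum_Ioo]
  simp only [hdiag, mul_zero, sum_const_zero, zero_add]
  refine sum_congr rfl fun n _ => sum_congr rfl fun n' _ => ?_
  rw [hg]
  ring

theorem sum_sum_sum_sum_mul_mul_eq_sum_sum_sum_mul_sum_mul {ι κ R : Type*} [CommSemiring R]
    (s : Finset ι) (t : Finset κ) (t' : κ → Finset κ) (x : κ → ι → R) (c : κ → κ → R) :
    ∑ m ∈ s, ∑ m' ∈ s, ∑ n ∈ t, ∑ n' ∈ t' n, x n m * x n' m' * c n n' =
      ∑ n ∈ t, ∑ n' ∈ t' n, (∑ m ∈ s, x n m) * (∑ m' ∈ s, x n' m') * c n n' := by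
  simp_rw [sum_mul_sum, sum_mul, sum_sigma' t t']
  exact (sum_congr rfl fun _ _ => sum_comm).trans sum_comm

theorem delay_quadform_im_expand_general (N M : ℕ)
    (u p : ℕ → ℕ → ℝ) :
    (∑ m ∈ range M, ∑ m' ∈ range M, ∑ n ∈ range N, ∑ n' ∈ range N,
        ((u n m * u n' m' * p n m * p n' m' * n' : ℝ) : ℂ) *
          Complex.exp (Complex.I * π * ((n' : ℝ) - n) / N)).im =
      ∑ m ∈ range M, ∑ m' ∈ range M, ∑ n ∈ range N, ∑ n' ∈ Ioo n N,
        u n m * u n' m' * p n m * p n' m' * ((n' : ℝ) - n) *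
          Real.sin (((n' : ℝ) - n) * π / N) := by
  have hphase : ∀ n n' : ℕ, (Complex.exp (Complex.I * π * ((n' : ℝ) - n) / N)).im =
      Real.sin (((n' : ℝ) - n) * π / N) := fun n n' => by
    rw [← Complex.exp_ofReal_mul_I_im]
    push_cast
    ring_nf
  have hodd : ∀ n n' : ℕ,
      Real.sin (((n : ℝ) - n') * π / N) = -Real.sin (((n' : ℝ) - n) * π / N) :=
    fun n n' => by rw [← Real.sin_neg]; ring_nf
  calc _ = ∑ m ∈ range M, ∑ m' ∈ range M, ∑ n ∈ range N, ∑ n' ∈ range N,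
        u n m * p n m * (u n' m' * p n' m') * ((n' : ℝ) * Real.sin (((n' : ℝ) - n) * π / N)) := by
        simp only [Complex.im_sum, Complex.im_ofReal_mul, hphase]
        congr! 4 with m _ m' _ n _ n' _
        ring
    _ = _ := by
        rw [sum_sum_sum_sum_mul_mul_eq_sum_sum_sum_mul_sum_mul,
          sum_range_sum_range_mul_natCast_of_antisymm N _ _ hodd,
          ← sum_sum_sum_sum_mul_mul_eq_sum_sum_sum_mul_sum_mul]
        congr! 4 with m _ m' _ n _ n' _
        ring

/-- Appendix B expansion of the delay quadratic form `u₀ᵀ B u₀`: the imaginary part of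
the four-fold sum with phases `e^{iπ(n'−n)/N}` equals the sine-weighted sum over
ordered pairs `n < n'`. -/
theorem delay_quadform_im_expand (N M : ℕ) (hN : 0 < N) (hM : 0 < M)
    (u p : ℕ → ℕ → ℝ) :
    (∑ m ∈ range M, ∑ m' ∈ range M, ∑ n ∈ range N, ∑ n' ∈ range N,
        ((u n m * u n' m' * p n m * p n' m' * n' : ℝ) : ℂ) *
          Complex.exp (Complex.I * π * ((n' : ℝ) - n) / N)).im =
      ∑ m ∈ range M, ∑ m' ∈ range M, ∑ n ∈ range N, ∑ n' ∈ Ioo n N,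
        u n m * u n' m' * p n m * p n' m' * ((n' : ℝ) - n) *
          Real.sin (((n' : ℝ) - n) * π / N) :=
  delay_quadform_im_expand_general N M u p
end

section
/- Let N, M be positive integers, let φ ∈ ℂ^N have entries φ_n = e^{−iπn/N}, let Φ = diag(φ) ∈ ℂ^{N×N}, let N̂ = diag(0,1,…,N−1) ∈ ℝ^{N×N}, and let Q₁ = 1_{M×M} ⊗ (φ (n^T ⊙ φ^H)) ∈ ℂ^{MN×MN}, where n = (0,1,…,N−1)^T, 1_{M×M} is the all-ones M×M matrix, ⊗ is the Kronecker product, and ⊙ is the entrywise product. Then for all real vectors u, p ∈ ℝ^{MN}: u^T Im{(I_M ⊗ Φ) p p^T (I_M ⊗ Φ^H N̂)} u = v^T · ((Q₁ − Q₁^H)/(2i)) · v, where v = u ⊙ p is the entrywise product of u and p. -/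
open Real Matrix
open scoped Kronecker

/-!
Since `Φ` and `N̂` are diagonal, `(I_M ⊗ Φ) p pᵀ (I_M ⊗ Φᴴ N̂) = P̃ Q₁ P̃` with `P̃ = diag p`.
As `P̃` is real, taking imaginary parts commutes with it, and `uᵀ P̃ A P̃ u = vᵀ A v`. Finally,
for a real vector `v` the form `vᵀ Qᴴ v` is the conjugate of `vᵀ Q v`, so
`vᵀ ((Q − Qᴴ)/(2i)) v = Im (vᵀ Q v) = vᵀ Im{Q} v`.
-/

namespace Matrix

variable {m n : Type*} [Fintype m] [Fintype n]

theorem dotProduct_conjTranspose_mulVec {α : Type*} [CommSemiring α] [StarRing α]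
    (A : Matrix n m α) (x : m → α) (y : n → α) :
    x ⬝ᵥ Aᴴ *ᵥ y = star (star y ⬝ᵥ A *ᵥ star x) := by
  rw [mulVec_conjTranspose, dotProduct_star, dotProduct_mulVec]

theorem dotProduct_diagonal_mul_mul_diagonal_mulVec {α : Type*} [CommSemiring α]
    [DecidableEq m] [DecidableEq n] (A : Matrix m n α) (a x : m → α) (b y : n → α) :
    x ⬝ᵥ (diagonal a * A * diagonal b) *ᵥ y = (x * a) ⬝ᵥ A *ᵥ (b * y) := by
  rw [← mulVec_mulVec, show diagonal b *ᵥ y = b * y from funext (mulVec_diagonal b y),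
    dotProduct_mulVec, ← vecMul_vecMul,
    show x ᵥ* diagonal a = x * a from funext (vecMul_diagonal x a), ← dotProduct_mulVec]

theorem map_im_diagonal_ofReal_mul_mul [DecidableEq m] [DecidableEq n]
    (A : Matrix m n ℂ) (a : m → ℝ) (b : n → ℝ) :
    (diagonal (fun i => (a i : ℂ)) * A * diagonal (fun j => (b j : ℂ))).map Complex.im =
      diagonal a * A.map Complex.im * diagonal b := by
  ext i j
  simp [diagonal_mul, mul_diagonal, Complex.mul_im]

theorem im_ofReal_dotProduct_mulVec (A : Matrix m n ℂ) (x : m → ℝ) (y : n → ℝ) :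
    ((fun i => (x i : ℂ)) ⬝ᵥ A *ᵥ fun j => (y j : ℂ)).im = x ⬝ᵥ A.map Complex.im *ᵥ y := by
  simp [dotProduct, mulVec, Complex.im_sum, Finset.mul_sum, Complex.mul_im]

theorem ofReal_dotProduct_skewHermitianPart_mulVec (A : Matrix n n ℂ) (x : n → ℝ) :
    (fun i => (x i : ℂ)) ⬝ᵥ ((2 * Complex.I)⁻¹ • (A - Aᴴ)) *ᵥ (fun i => (x i : ℂ)) =
      ((x ⬝ᵥ A.map Complex.im *ᵥ x : ℝ) : ℂ) := by
  set z := (fun i => (x i : ℂ)) ⬝ᵥ A *ᵥ fun i => (x i : ℂ)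
  have hx : star (fun i => (x i : ℂ)) = fun i => (x i : ℂ) := by ext; simp
  rw [smul_mulVec, dotProduct_smul, sub_mulVec, dotProduct_sub, dotProduct_conjTranspose_mulVec,
    hx, ← im_ofReal_dotProduct_mulVec, smul_eq_mul]
  change _ * (z - (starRingEnd ℂ) z) = _
  rw [Complex.sub_conj]
  field_simp
  push_cast
  ring

theorem one_kronecker_diagonal_mul_vecMulVec_mul {κ ι α : Type*} [Fintype κ] [Fintype ι]
    [DecidableEq κ] [DecidableEq ι] [CommSemiring α] [StarRing α]
    (φ d : ι → α) (p : κ × ι → α) :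
    ((1 : Matrix κ κ α) ⊗ₖ diagonal φ) * vecMulVec p p *
        ((1 : Matrix κ κ α) ⊗ₖ ((diagonal φ)ᴴ * diagonal d)) =
      diagonal p *
        ((of fun _ _ : κ => (1 : α)) ⊗ₖ of fun i j => φ i * (d j * star (φ j))) * diagonal p := by
  rw [← diagonal_one, diagonal_conjTranspose, diagonal_mul_diagonal, diagonal_kronecker_diagonal,
    diagonal_kronecker_diagonal]
  ext i j
  simp only [diagonal_mul, mul_diagonal, vecMulVec_apply, kroneckerMap_apply, of_apply,
    Pi.star_apply]
  ring

end Matrix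

theorem delay_quadform_factorization_general (N M : ℕ)
    (φ : Fin N → ℂ)
    (u p : Fin M × Fin N → ℝ) :
    letI Φ : Matrix (Fin N) (Fin N) ℂ := Matrix.diagonal φ
    letI Nhat : Matrix (Fin N) (Fin N) ℂ :=
      Matrix.diagonal fun n : Fin N => ((n : ℕ) : ℂ)
    letI Q₁ : Matrix (Fin M × Fin N) (Fin M × Fin N) ℂ :=
      (Matrix.of fun _ _ : Fin M => (1 : ℂ)) ⊗ₖ
        (Matrix.of fun i j : Fin N => φ i * (((j : ℕ) : ℂ) * star (φ j)))
    letI Bmat : Matrix (Fin M × Fin N) (Fin M × Fin N) ℂ :=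
      ((1 : Matrix (Fin M) (Fin M) ℂ) ⊗ₖ Φ) *
        Matrix.vecMulVec (fun i => ((p i : ℝ) : ℂ)) (fun j => ((p j : ℝ) : ℂ)) *
        ((1 : Matrix (Fin M) (Fin M) ℂ) ⊗ₖ (Φᴴ * Nhat))
    letI B : Matrix (Fin M × Fin N) (Fin M × Fin N) ℝ :=
      Matrix.of fun i j => (Bmat i j).im
    letI v : Fin M × Fin N → ℂ := fun i => ((u i * p i : ℝ) : ℂ)
    ((u ⬝ᵥ B.mulVec u : ℝ) : ℂ) =
      v ⬝ᵥ ((2 * Complex.I)⁻¹ • (Q₁ - Q₁ᴴ)).mulVec v := by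
  rw [one_kronecker_diagonal_mul_vecMulVec_mul]
  change ((u ⬝ᵥ (diagonal (fun i => (p i : ℂ)) * _ *
    diagonal fun i => (p i : ℂ)).map Complex.im *ᵥ u : ℝ) : ℂ) = _
  rw [map_im_diagonal_ofReal_mul_mul, dotProduct_diagonal_mul_mul_diagonal_mulVec, mul_comm p u]
  exact (ofReal_dotProduct_skewHermitianPart_mulVec _ (u * p)).symm

/-- Factorization (eqs. 37–38): `u₀ᵀ B u₀ = vᵀ B₀ v` with `v = u ⊙ p`, where
`B = Im{(I_M ⊗ Φ) p pᵀ (I_M ⊗ Φᴴ N̂)}` (imaginary part taken entrywise),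
`Φ = diag(e^{−iπn/N})`, `N̂ = diag(0,…,N−1)`, and
`B₀ = (Q₁ − Q₁ᴴ)/(2i)` with `Q₁ = 1_{M×M} ⊗ (φ (nᵀ ⊙ φᴴ))`. -/
theorem delay_quadform_factorization (N M : ℕ) (hN : 0 < N) (hM : 0 < M)
    (φ : Fin N → ℂ) (hφ : ∀ n : Fin N, φ n = Complex.exp (-Complex.I * π * n / N))
    (u p : Fin M × Fin N → ℝ) :
    letI Φ : Matrix (Fin N) (Fin N) ℂ := Matrix.diagonal φ
    letI Nhat : Matrix (Fin N) (Fin N) ℂ :=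
      Matrix.diagonal fun n : Fin N => ((n : ℕ) : ℂ)
    letI Q₁ : Matrix (Fin M × Fin N) (Fin M × Fin N) ℂ :=
      (Matrix.of fun _ _ : Fin M => (1 : ℂ)) ⊗ₖ
        (Matrix.of fun i j : Fin N => φ i * (((j : ℕ) : ℂ) * star (φ j)))
    letI Bmat : Matrix (Fin M × Fin N) (Fin M × Fin N) ℂ :=
      ((1 : Matrix (Fin M) (Fin M) ℂ) ⊗ₖ Φ) *
        Matrix.vecMulVec (fun i => ((p i : ℝ) : ℂ)) (fun j => ((p j : ℝ) : ℂ)) *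
        ((1 : Matrix (Fin M) (Fin M) ℂ) ⊗ₖ (Φᴴ * Nhat))
    letI B : Matrix (Fin M × Fin N) (Fin M × Fin N) ℝ :=
      Matrix.of fun i j => (Bmat i j).im
    letI v : Fin M × Fin N → ℂ := fun i => ((u i * p i : ℝ) : ℂ)
    ((u ⬝ᵥ B.mulVec u : ℝ) : ℂ) =
      v ⬝ᵥ ((2 * Complex.I)⁻¹ • (Q₁ - Q₁ᴴ)).mulVec v :=
  delay_quadform_factorization_general N M φ u p
end

section
/- Let N ≥ 2, M ≥ 1 be integers, Δ_f > 0, and let u_{n,m}, p_{n,m} be real numbers for 0 ≤ n ≤ N−1, 0 ≤ m ≤ M−1. Define F : ℝ → ℝ by F(τ) = |Σ_{m=0}^{M−1} Σ_{n=0}^{N−1} u_{n,m} p_{n,m} e^{−i2π n Δ_f τ}|². Then F is differentiable, and at τ₀ = 1/(2NΔ_f) its derivative is F′(τ₀) = −4πΔ_f · Σ_{m=0}^{M−1} Σ_{m'=0}^{M−1} Σ_{0 ≤ n < n' ≤ N−1} u_{n,m} u_{n',m'} p_{n,m} p_{n',m'} (n'−n) sin((n'−n)π/N). In particular, if u_{n,m}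 ∈ {0,1}, p_{n,m} ≥ 0, and there exist (n₁,m₁), (n₂,m₂) with n₁ ≠ n₂ and u_{n₁,m₁} p_{n₁,m₁} > 0, u_{n₂,m₂} p_{n₂,m₂} > 0, then F′(τ₀) < 0. -/
open Real Finset

/-!
Write `a n = Σ_m u_{n,m} p_{n,m}`. Expanding `|Σ_n a_n e^{-2πi n Δf τ}|²` gives the cosine
polynomial `Σ_{n,n'} a_n a_{n'} cos(2πΔf (n' - n) τ)`, whose derivative at `τ₀ = 1/(2NΔf)` is
`-2πΔf Σ_{n,n'} a_n a_{n'} (n' - n) sin((n' - n)π/N)`. Since `x ↦ x sin(xπ/N)` is even, the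
summand is symmetric and vanishes on the diagonal, so the double sum is twice the sum over
`n < n'`. There `0 < n' - n < N` puts the sine in `(0, π)`, so every term is nonnegative
when the `a_n` are, and the two powered subcarriers give a positive term.
-/

open Complex ComplexConjugate in
theorem norm_sq_sum_ofReal_mul_exp_neg {ι : Type*} (s : Finset ι) (a θ : ι → ℝ) :
    ‖∑ i ∈ s, (a i : ℂ) * exp (-I * θ i)‖ ^ 2 =
      ∑ i ∈ s, ∑ j ∈ s, a i * a j * Real.cos (θ j - θ i) := by
  set z := ∑ i ∈ s, (a i : ℂ) * exp (-I * θ i)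
  have hnorm : ‖z‖ ^ 2 = (z * conj z).re := by rw [mul_conj', ← ofReal_pow, ofReal_re]
  have hconj : conj z = ∑ j ∈ s, (a j : ℂ) * exp (I * θ j) := by
    simp [z, map_sum, ← exp_conj]
  have hterm : ∀ i j, (a i : ℂ) * exp (-I * θ i) * ((a j : ℂ) * exp (I * θ j)) =
      ((a i * a j : ℝ) : ℂ) * exp ((θ j - θ i : ℝ) * I) := by
    intro i j
    rw [mul_mul_mul_comm, ← Complex.exp_add]
    push_cast
    ring_nf
  simp only [hnorm, hconj, z, sum_mul_sum, re_sum, hterm, re_ofReal_mul, exp_ofReal_mul_I_re]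

theorem hasDerivAt_sum_sum_mul_cos_mul {ι κ : Type*} (s : Finset ι) (t : Finset κ)
    (c ω : ι → κ → ℝ) (x : ℝ) :
    HasDerivAt (fun τ => ∑ i ∈ s, ∑ j ∈ t, c i j * Real.cos (ω i j * τ))
      (-∑ i ∈ s, ∑ j ∈ t, c i j * ω i j * Real.sin (ω i j * x)) x := by
  simp only [← sum_neg_distrib]
  refine HasDerivAt.fun_sum fun i _ => HasDerivAt.fun_sum fun j _ => ?_
  have hlin : HasDerivAt (fun τ => ω i j * τ) (ω i j) x := by
    simpa using (hasDerivAt_id x).const_mul (ω i j)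
  exact (((Real.hasDerivAt_cos _).comp x hlin).const_mul (c i j)).congr_deriv (by ring)

theorem sum_range_sum_range_eq_two_mul_sum_Ioo {R : Type*} [NonAssocSemiring R] (N : ℕ)
    (f : ℕ → ℕ → R) (hsymm : ∀ i j, f i j = f j i) (hdiag : ∀ i, f i i = 0) :
    ∑ i ∈ range N, ∑ j ∈ range N, f i j =
      2 * ∑ i ∈ range N, ∑ j ∈ Ioo i N, f i j := by
  have hsplit : ∀ i ∈ range N, ∑ j ∈ range N, f i j =
      ∑ j ∈ range i, f i j + ∑ j ∈ Ioo i N, f i j := by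
    intro i hi
    rw [mem_range] at hi
    rw [range_eq_Ico, ← sum_Ico_consecutive _ (Nat.zero_le i) hi.le, ← Ioo_insert_left hi,
      sum_insert (by simp), hdiag, zero_add, ← range_eq_Ico]
  have hlower :
      ∑ i ∈ range N, ∑ j ∈ range i, f i j = ∑ i ∈ range N, ∑ j ∈ Ioo i N, f i j := by
    rw [sum_comm' (s' := fun j => Ioo j N) (t' := range N)
      (fun i j => by simp only [mem_range, mem_Ioo]; omega)]
    exact sum_congr rfl fun i _ => sum_congr rfl fun j _ => hsymm j i
  rw [sum_congr rfl hsplit, sum_add_distrib, hlower, two_mul]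

theorem sum_range_sum_Ioo_mul_mul_pos {N : ℕ} {a : ℕ → ℝ} {w : ℕ → ℕ → ℝ}
    (ha : ∀ n < N, 0 ≤ a n) (hw : ∀ n n', n < n' → n' < N → 0 < w n n')
    {i j : ℕ} (hij : i < j) (hj : j < N) (hai : 0 < a i) (haj : 0 < a j) :
    0 < ∑ n ∈ range N, ∑ n' ∈ Ioo n N, a n * a n' * w n n' := by
  have hterm : ∀ n ∈ range N, ∀ n' ∈ Ioo n N, 0 ≤ a n * a n' * w n n' := by
    intro n hn n' hn'
    rw [mem_Ioo] at hn'
    exact mul_nonneg (mul_nonneg (ha n (mem_range.1 hn)) (ha n' hn'.2)) (hw n n' hn'.1 hn'.2).le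
  refine sum_pos' (fun n hn => sum_nonneg (hterm n hn)) ⟨i, mem_range.2 (hij.trans hj), ?_⟩
  exact sum_pos' (hterm i (mem_range.2 (hij.trans hj)))
    ⟨j, mem_Ioo.2 ⟨hij, hj⟩, mul_pos (mul_pos hai haj) (hw i j hij hj)⟩

theorem mul_sin_mul_pi_div_pos {x y : ℝ} (hx : 0 < x) (hxy : x < y) :
    0 < x * Real.sin (x * π / y) := by
  have hy : 0 < y := hx.trans hxy
  refine mul_pos hx (Real.sin_pos_of_pos_of_lt_pi (by positivity) ?_)
  rw [div_lt_iff₀ hy, mul_comm]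
  exact mul_lt_mul_of_pos_left hxy pi_pos

/-- The squared zero-Doppler cut `|χ(τ, 0)|²` of the OFDM ambiguity function (up to `1/(MN)²`),
where `a n = Σ_m u_{n,m} p_{n,m}` is the total sensing power on subcarrier `n`. -/
noncomputable def zeroDopplerPower (N : ℕ) (Δf : ℝ) (a : ℕ → ℝ) (τ : ℝ) : ℝ :=
  ‖∑ n ∈ range N, (a n : ℂ) * Complex.exp (-Complex.I * (2 * π * n * Δf * τ))‖ ^ 2

theorem zeroDopplerPower_eq_sum_sum_cos (N : ℕ) (Δf : ℝ) (a : ℕ → ℝ) (τ : ℝ) :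
    zeroDopplerPower N Δf a τ = ∑ n ∈ range N, ∑ n' ∈ range N,
      a n * a n' * Real.cos (2 * π * Δf * ((n' : ℝ) - n) * τ) := by
  have hθ : ∀ n n' : ℕ, 2 * π * Δf * ((n' : ℝ) - n) * τ =
      2 * π * n' * Δf * τ - 2 * π * n * Δf * τ := by
    intros; ring
  simp only [hθ]
  rw [zeroDopplerPower, ← norm_sq_sum_ofReal_mul_exp_neg]
  push_cast
  rfl

theorem hasDerivAt_zeroDopplerPower (N : ℕ) (Δf : ℝ) (a : ℕ → ℝ) (τ : ℝ) :
    HasDerivAt (zeroDopplerPower N Δf a)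
      (-(2 * π * Δf) * ∑ n ∈ range N, ∑ n' ∈ range N,
        a n * a n' * (((n' : ℝ) - n) * Real.sin (2 * π * Δf * ((n' : ℝ) - n) * τ))) τ := by
  rw [show zeroDopplerPower N Δf a = _ from funext (zeroDopplerPower_eq_sum_sum_cos N Δf a)]
  refine (hasDerivAt_sum_sum_mul_cos_mul _ _ _ _ τ).congr_deriv ?_
  simp only [mul_sum, ← sum_neg_distrib]
  exact sum_congr rfl fun n _ => sum_congr rfl fun n' _ => by ring

theorem deriv_zeroDopplerPower_half_resolution (N : ℕ) {Δf : ℝ} (hΔf : Δf ≠ 0)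
    (a : ℕ → ℝ) :
    deriv (zeroDopplerPower N Δf a) (1 / (2 * N * Δf)) =
      -(4 * π * Δf) * ∑ n ∈ range N, ∑ n' ∈ Ioo n N,
        a n * a n' * (((n' : ℝ) - n) * Real.sin (((n' : ℝ) - n) * π / N)) := by
  have hphase : ∀ n n' : ℕ, 2 * π * Δf * ((n' : ℝ) - n) * (1 / (2 * N * Δf)) =
      ((n' : ℝ) - n) * π / N := by
    intros; field_simp
  have hsymm : ∀ n n' : ℕ,
      a n * a n' * (((n' : ℝ) - n) * Real.sin (((n' : ℝ) - n) * π / N)) =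
      a n' * a n * (((n : ℝ) - n') * Real.sin (((n : ℝ) - n') * π / N)) := by
    intro n n'
    rw [show (n : ℝ) - n' = -((n' : ℝ) - n) by ring]
    simp only [neg_mul, neg_div, Real.sin_neg]
    ring
  rw [(hasDerivAt_zeroDopplerPower N Δf a _).deriv]
  simp only [hphase]
  rw [sum_range_sum_range_eq_two_mul_sum_Ioo N _ hsymm (by simp)]
  ring

theorem deriv_zeroDopplerPower_half_resolution_neg {N : ℕ} {Δf : ℝ} (hΔf : 0 < Δf)
    {a : ℕ → ℝ} (ha : ∀ n < N, 0 ≤ a n) {i j : ℕ} (hij : i ≠ j) (hi : i < N) (hj : j < N)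
    (hai : 0 < a i) (haj : 0 < a j) :
    deriv (zeroDopplerPower N Δf a) (1 / (2 * N * Δf)) < 0 := by
  have hw : ∀ n n' : ℕ, n < n' → n' < N →
      0 < ((n' : ℝ) - n) * Real.sin (((n' : ℝ) - n) * π / N) := fun n n' h h' =>
    mul_sin_mul_pi_div_pos (sub_pos.2 (by exact_mod_cast h))
      (by linarith [(n.cast_nonneg : (0 : ℝ) ≤ n), (by exact_mod_cast h' : (n' : ℝ) < N)])
  have hsum : 0 < ∑ n ∈ range N, ∑ n' ∈ Ioo n N,
      a n * a n' * (((n' : ℝ) - n) * Real.sin (((n' : ℝ) - n) * π / N)) := by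
    rcases hij.lt_or_gt with h | h
    · exact sum_range_sum_Ioo_mul_mul_pos ha hw h hj hai haj
    · exact sum_range_sum_Ioo_mul_mul_pos ha hw h hi haj hai
  rw [deriv_zeroDopplerPower_half_resolution N hΔf.ne' a]
  exact mul_neg_of_neg_of_pos (neg_neg_of_pos (by positivity)) hsum

theorem delay_mainlobe_deriv_general (N M : ℕ)
    (Δf : ℝ) (hΔf : 0 < Δf) (u p : ℕ → ℕ → ℝ) (F : ℝ → ℝ)
    (hF : ∀ τ : ℝ, F τ =
      ‖(∑ m ∈ range M, ∑ n ∈ range N,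
        ((u n m * p n m : ℝ) : ℂ) *
          Complex.exp (-Complex.I * (2 * π * n * Δf * τ)))‖ ^ 2) :
    Differentiable ℝ F ∧
    deriv F (1 / (2 * N * Δf)) =
      -(4 * π * Δf) *
        ∑ m ∈ range M, ∑ m' ∈ range M, ∑ n ∈ range N, ∑ n' ∈ Ioo n N,
          u n m * u n' m' * p n m * p n' m' * ((n' : ℝ) - n) *
            Real.sin (((n' : ℝ) - n) * π / N) ∧
    ((∀ n < N, ∀ m < M, u n m = 0 ∨ u n m = 1) →
      (∀ n < N, ∀ m < M, 0 ≤ p n m) →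
      ∀ n₁ m₁ n₂ m₂ : ℕ, n₁ < N → m₁ < M → n₂ < N → m₂ < M → n₁ ≠ n₂ →
        0 < u n₁ m₁ * p n₁ m₁ → 0 < u n₂ m₂ * p n₂ m₂ →
        deriv F (1 / (2 * N * Δf)) < 0) := by
  set A : ℕ → ℝ := fun n => ∑ m ∈ range M, u n m * p n m with hA
  obtain rfl : F = zeroDopplerPower N Δf A := funext fun τ => by
    rw [hF, zeroDopplerPower, sum_comm]
    push_cast [hA, sum_mul]
    rfl
  refine ⟨fun τ => (hasDerivAt_zeroDopplerPower N Δf A τ).differentiableAt, ?_, ?_⟩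
  · rw [deriv_zeroDopplerPower_half_resolution N hΔf.ne']
    simp_rw [sum_comm (s := range M) (t := range N), sum_comm (s := range M) (t := Ioo _ N),
      hA, sum_mul_sum, sum_mul]
    exact congrArg _ <| sum_congr rfl fun n _ => sum_congr rfl fun n' _ =>
      sum_congr rfl fun m _ => sum_congr rfl fun m' _ => by ring
  · intro hu hp n₁ m₁ n₂ m₂ hn₁ hm₁ hn₂ hm₂ hne h₁ h₂
    have hup : ∀ n < N, ∀ m < M, 0 ≤ u n m * p n m := fun n hn m hm => by
      rcases hu n hn m hm with h | h <;> simp [h, hp n hn m hm]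
    have hA_pos : ∀ n m, n < N → m < M → 0 < u n m * p n m → 0 < A n := fun n m hn hm h =>
      sum_pos' (fun m' hm' => hup n hn m' (mem_range.1 hm')) ⟨m, mem_range.2 hm, h⟩
    exact deriv_zeroDopplerPower_half_resolution_neg hΔf
      (fun n hn => sum_nonneg fun m hm => hup n hn m (mem_range.1 hm)) hne hn₁ hn₂
      (hA_pos n₁ m₁ hn₁ hm₁ h₁) (hA_pos n₂ m₂ hn₂ hm₂ h₂)

/-- Delay-resolution first-order analysis: `F(τ) = |Σ_{m,n} u_{n,m} p_{n,m}
e^{−i2πnΔ_f τ}|²` is differentiable, its derivative at `τ₀ = 1/(2NΔ_f)` equals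
`−4πΔ_f · Σ_{m,m'} Σ_{n<n'} u_{n,m}u_{n',m'}p_{n,m}p_{n',m'}(n'−n)sin((n'−n)π/N)`,
and under Boolean selections, nonnegative powers, and two selected-and-powered
elements on distinct subcarriers, this derivative is strictly negative. -/
theorem delay_mainlobe_deriv (N M : ℕ) (hN : 2 ≤ N) (hM : 1 ≤ M)
    (Δf : ℝ) (hΔf : 0 < Δf) (u p : ℕ → ℕ → ℝ) (F : ℝ → ℝ)
    (hF : ∀ τ : ℝ, F τ =
      ‖(∑ m ∈ range M, ∑ n ∈ range N,
        ((u n m * p n m : ℝ) : ℂ) *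
          Complex.exp (-Complex.I * (2 * π * n * Δf * τ)))‖ ^ 2) :
    Differentiable ℝ F ∧
    deriv F (1 / (2 * N * Δf)) =
      -(4 * π * Δf) *
        ∑ m ∈ range M, ∑ m' ∈ range M, ∑ n ∈ range N, ∑ n' ∈ Ioo n N,
          u n m * u n' m' * p n m * p n' m' * ((n' : ℝ) - n) *
            Real.sin (((n' : ℝ) - n) * π / N) ∧
    ((∀ n < N, ∀ m < M, u n m = 0 ∨ u n m = 1) →
      (∀ n < N, ∀ m < M, 0 ≤ p n m) →
      ∀ n₁ m₁ n₂ m₂ : ℕ, n₁ < N → m₁ < M → n₂ < N → m₂ < M → n₁ ≠ n₂ →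
        0 < u n₁ m₁ * p n₁ m₁ → 0 < u n₂ m₂ * p n₂ m₂ →
        deriv F (1 / (2 * N * Δf)) < 0) :=
  delay_mainlobe_deriv_general N M Δf hΔf u p F hF
end
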